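/- arXiv:2004.07650 — 2 statements merged into one kernel-verified Lean document; each statement's English description precedes it below -/
import Mathlib

section
/- Let G = (V, E) be a connected graph, S ⊆ V, and S' a subset with ∅ ⊊ S' ⊊ S. Let P be a partition of V such that G[P] is connected for every P in the partition. Then the number of parts P ∈ P satisfying both (1) S ∩ P ≠ ∅ and (2) there exists a cut (V', V∖V') of G partitioning S into S' and S∖S' whose cut-set ∂_G(V') consists entirely of edges of G[P], is at most two. -/
open SimpleGraph

/-- The cut-set of a vertex set `A`: edges of `G` with one endpoint in `A` and one outside. -/
def ecut {V : Type*} (G : SimpleGraph V) (A : Set V) : Set (Sym2 V) :=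
  {e | e ∈ G.edgeSet ∧ ∃ u v, e = s(u, v) ∧ u ∈ A ∧ v ∉ A}

/-- Edges all of whose endpoints lie in `A`. -/
def edgesWithin {V : Type*} (A : Set V) : Set (Sym2 V) :=
  {e | ∀ x ∈ e, x ∈ A}

/-- The set of endpoints of a set of edges. -/
def endpts {V : Type*} (F : Set (Sym2 V)) : Set V :=
  {x | ∃ e ∈ F, x ∈ e}

/-- `F` intercepts the cut `(A, Aᶜ)`: no connected component of `G` with the edges of `F`
removed contains all edges of the cut-set of `A`. -/
def Intercepts {V : Type*} (G : SimpleGraph V) (F : Set (Sym2 V)) (A : Set V) : Prop :=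
  ¬ ∃ u : V, ∀ e ∈ ecut G A,
    e ∈ (G.deleteEdges F).edgeSet ∧ ∀ x ∈ e, (G.deleteEdges F).Reachable u x

/-- A cut `(A, Aᶜ)` is atomic if both sides induce connected subgraphs. -/
def AtomicCut {V : Type*} (G : SimpleGraph V) (A : Set V) : Prop :=
  (G.induce A).Connected ∧ (G.induce Aᶜ).Connected

/-- Two cuts are parallel if one side of the first is contained in one side of the second. -/
def ParallelCuts {V : Type*} (A B : Set V) : Prop :=
  A ⊆ B ∨ A ⊆ Bᶜ ∨ Aᶜ ⊆ B ∨ Aᶜ ⊆ Bᶜ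

/-- A partition of the vertex set into nonempty clusters. -/
def IsVertexPartition {V : Type*} (Pa : Set (Set V)) : Prop :=
  (∀ P ∈ Pa, P.Nonempty) ∧ ∀ x : V, ∃! P, P ∈ Pa ∧ x ∈ P

/-- The intercluster edges of a vertex partition. -/
def interEdges {V : Type*} (G : SimpleGraph V) (Pa : Set (Set V)) : Set (Sym2 V) :=
  {e | e ∈ G.edgeSet ∧ ∃ u v, e = s(u, v) ∧ ∀ P ∈ Pa, ¬(u ∈ P ∧ v ∈ P)}

/-- `W` is the vertex set of a connected component of `G`. -/
def IsComponentSet {V : Type*} (G : SimpleGraph V) (W : Set V) : Prop :=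
  ∃ v : V, W = {u | G.Reachable u v}

/-- `E'` is an `IA_H(T, t, q, d, c)` set: it is the set of intercluster edges of a vertex
partition with connected parts, and within each connected component `W` of `H`, for every
nonempty `T' ⊆ T ∩ W` admitting a `(T', T∖T', t, d)`-cut of size `α ≤ d`, there is a
`(T', T∖T', q, α)`-cut whose cut-set has at most `max (α - c) 0` edges inside any single part. -/
def IsIASet {V : Type*} (H : SimpleGraph V) (T : Set V) (t q d c : ℕ)
    (E' : Set (Sym2 V)) : Prop :=
  ∃ Pa : Set (Set V), IsVertexPartition Pa ∧ (∀ P ∈ Pa, (H.induce P).Connected) ∧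
    E' = interEdges H Pa ∧
    ∀ W : Set V, IsComponentSet H W →
      ∀ T' : Set V, T' ⊆ T ∩ W → T'.Nonempty → ∀ α : ℕ, α ≤ d →
        (∃ A : Set V, A ⊆ W ∧ A.ncard ≤ t ∧ A ∩ T = T' ∧ (ecut H A).ncard = α) →
        ∃ B : Set V, B ⊆ W ∧ B.ncard ≤ q ∧ B ∩ T = T' ∧ (ecut H B).ncard ≤ α ∧
          ∀ P ∈ Pa, (ecut H B ∩ edgesWithin P).ncard ≤ α - c

lemma ecut_compl {V : Type*} (G : SimpleGraph V) (W : Set V) :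
    ecut G Wᶜ = ecut G W := by
  ext e
  constructor
  · rintro ⟨he, u, v, rfl, hu, hv⟩
    exact ⟨he, v, u, Sym2.eq_swap, not_not.mp hv, hu⟩
  · rintro ⟨he, u, v, rfl, hu, hv⟩
    exact ⟨he, v, u, Sym2.eq_swap, hv, not_not.mpr hu⟩

lemma mem_ecut_of_adj {V : Type*} (G : SimpleGraph V) {W : Set V} {x y : V}
    (h : G.Adj x y) (hx : x ∈ W) (hy : y ∉ W) : s(x, y) ∈ ecut G W :=
  ⟨h, x, y, rfl, hx, hy⟩

lemma part_subset_side {V : Type*} (G : SimpleGraph V) {P Q W : Set V}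
    (hdisj : ∀ z, ¬(z ∈ P ∧ z ∈ Q))
    (hcut : ecut G W ⊆ edgesWithin Q) (hPc : (G.induce P).Connected)
    {x : V} (hx : x ∈ P) (hxW : x ∈ W) : P ⊆ W := by
  intro y hy
  have key : ∀ (a b : P) (w : (G.induce P).Walk a b), (a : V) ∈ W → (b : V) ∈ W := by
    intro a b w
    induction w with
    | nil => exact id
    | @cons a c b h p ih =>
      intro ha
      refine ih ?_
      by_contra hc
      have hadj : G.Adj (a : V) (c : V) := h
      have := hcut (mem_ecut_of_adj G hadj ha hc) (a : V) (Sym2.mem_mk_left _ _)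
      exact hdisj _ ⟨a.2, this⟩
  obtain ⟨w⟩ := hPc.preconnected ⟨x, hx⟩ ⟨y, hy⟩
  exact key _ _ w hxW

lemma core {V : Type*} (G : SimpleGraph V) (hG : G.Connected)
    (S S' : Set V) (s : V) (hsS : s ∈ S) (hsS' : s ∉ S')
    (P Q : Set V) (hdisj : ∀ z, ¬(z ∈ P ∧ z ∈ Q))
    (hPc : (G.induce P).Connected) (hQc : (G.induce Q).Connected)
    (WP WQ : Set V) (hWPS : WP ∩ S = S') (hWQS : WQ ∩ S = S')
    (hEP : ecut G WP ⊆ edgesWithin P) (hEQ : ecut G WQ ⊆ edgesWithin Q)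
    (hP : (P ∩ (S ∩ S')).Nonempty) (hQ : (Q ∩ (S ∩ S')).Nonempty) : False := by
  obtain ⟨p0, hp0P, hp0S, hp0S'⟩ := hP
  obtain ⟨q0, hq0Q, hq0S, hq0S'⟩ := hQ
  have hp0WQ : p0 ∈ WQ := (hWQS ▸ hp0S' : p0 ∈ WQ ∩ S).1
  have hq0WP : q0 ∈ WP := (hWPS ▸ hq0S' : q0 ∈ WP ∩ S).1
  have hPsub : P ⊆ WQ := part_subset_side G hdisj hEQ hPc hp0P hp0WQ
  have hQsub : Q ⊆ WP :=
    part_subset_side G (fun z hz => hdisj z ⟨hz.2, hz.1⟩) hEP hQc hq0Q hq0WP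
  set H := G.deleteEdges (ecut G WQ) with hH
  have hsWQ : s ∉ WQ := by
    intro h
    have : s ∈ WQ ∩ S := ⟨h, hsS⟩
    rw [hWQS] at this
    exact hsS' this
  have hsWP : s ∉ WP := by
    intro h
    have : s ∈ WP ∩ S := ⟨h, hsS⟩
    rw [hWPS] at this
    exact hsS' this
  -- invariant along H-walks
  have inv : ∀ (a b : V) (_ : H.Walk a b), (a ∉ WQ ∧ a ∉ WP) → (b ∉ WQ ∧ b ∉ WP) := by
    intro a b w
    induction w with
    | nil => exact id
    | @cons a c b h p ih =>
      intro ha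
      refine ih ?_
      obtain ⟨hadj, hne⟩ := (SimpleGraph.deleteEdges_adj).mp h
      have hcWQ : c ∉ WQ := by
        intro hc
        exact hne (Sym2.eq_swap ▸ mem_ecut_of_adj G hadj.symm hc ha.1)
      refine ⟨hcWQ, ?_⟩
      intro hc
      have := hEP (mem_ecut_of_adj G hadj.symm hc ha.2) a (Sym2.mem_mk_right _ _)
      exact ha.1 (hPsub this)
  -- s reaches Q in H
  have reachQ : ∃ q ∈ Q, H.Reachable s q := by
    have aux : ∀ (a b : V) (_ : G.Walk a b), H.Reachable s a →
        (H.Reachable s b ∨ ∃ q ∈ Q, H.Reachable s q) := by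
      intro a b w
      induction w with
      | nil => intro h; exact Or.inl h
      | @cons a c b h p ih =>
        intro hra
        by_cases hmem : s(a, c) ∈ ecut G WQ
        · exact Or.inr ⟨a, hEQ hmem a (Sym2.mem_mk_left _ _), hra⟩
        · exact ih (hra.trans (Adj.reachable ((SimpleGraph.deleteEdges_adj).mpr ⟨h, hmem⟩)))
    obtain ⟨w⟩ := hG.preconnected s q0
    rcases aux s q0 w (Reachable.refl s) with h | h
    · exact ⟨q0, hq0Q, h⟩
    · exact h
  obtain ⟨q, hqQ, hr⟩ := reachQ
  obtain ⟨w⟩ := hr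
  exact (inv s q w ⟨hsWQ, hsWP⟩).2 (hQsub hqQ)

/-- Let `G` be connected, `∅ ⊊ S' ⊊ S`, and `Pa` a partition of the vertices into parts
inducing connected subgraphs. Then at most two parts `P` satisfy both: `S ∩ P ≠ ∅`, and
there is a cut of `G` partitioning `S` into `S'` and `S ∖ S'` whose cut-set consists
entirely of edges of `G[P]`. -/
theorem statement_7 {V : Type*} [Fintype V] [DecidableEq V]
    (G : SimpleGraph V) (hG : G.Connected)
    (S S' : Set V) (hS'sub : S' ⊆ S) (hS'ne : S'.Nonempty) (hS'pr : S' ≠ S)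
    (Pa : Set (Set V)) (hpart : IsVertexPartition Pa)
    (hconn : ∀ P ∈ Pa, (G.induce P).Connected) :
    {P | P ∈ Pa ∧ (S ∩ P).Nonempty ∧
      ∃ Wc : Set V, Wc ∩ S = S' ∧ ecut G Wc ⊆ edgesWithin P}.ncard ≤ 2 := by
  classical
  set T : Set (Set V) := {P | P ∈ Pa ∧ (S ∩ P).Nonempty ∧
      ∃ Wc : Set V, Wc ∩ S = S' ∧ ecut G Wc ⊆ edgesWithin P} with hT
  have hdisj : ∀ P Q : Set V, P ∈ Pa → Q ∈ Pa → P ≠ Q → ∀ z, ¬(z ∈ P ∧ z ∈ Q) := by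
    rintro P Q hP hQ hne z ⟨hzP, hzQ⟩
    obtain ⟨R, _, hun⟩ := hpart.2 z
    exact hne ((hun P ⟨hP, hzP⟩).trans (hun Q ⟨hQ, hzQ⟩).symm)
  obtain ⟨s, hsS, hsS'⟩ : ∃ s, s ∈ S ∧ s ∉ S' := by
    by_contra h
    push_neg at h
    exact hS'pr (hS'sub.antisymm h)
  obtain ⟨s', hs'⟩ := hS'ne
  -- two distinct elements of T with the same "side" give a contradiction
  have key : ∀ P Q : Set V, P ∈ T → Q ∈ T → P ≠ Q →
      ((P ∩ (S ∩ S')).Nonempty ↔ (Q ∩ (S ∩ S')).Nonempty) → False := by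
    rintro P Q ⟨hPPa, hPS, WP, hWPS, hEP⟩ ⟨hQPa, hQS, WQ, hWQS, hEQ⟩ hne hiff
    by_cases hside : (P ∩ (S ∩ S')).Nonempty
    · exact core G hG S S' s hsS hsS' P Q (hdisj P Q hPPa hQPa hne)
        (hconn P hPPa) (hconn Q hQPa) WP WQ hWPS hWQS hEP hEQ hside (hiff.mp hside)
    · -- complemented version with S'' = S \ S'
      have hQside : ¬ (Q ∩ (S ∩ S')).Nonempty := fun h => hside (hiff.mpr h)
      have hWPS'' : WPᶜ ∩ S = S \ S' := by
        ext z
        simp only [Set.mem_inter_iff, Set.mem_compl_iff, Set.mem_diff]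
        constructor
        · rintro ⟨hz, hzS⟩
          exact ⟨hzS, fun hz' => hz ((hWPS ▸ hz' : z ∈ WP ∩ S).1)⟩
        · rintro ⟨hzS, hz'⟩
          refine ⟨fun hzW => hz' ?_, hzS⟩
          have : z ∈ WP ∩ S := ⟨hzW, hzS⟩
          rw [hWPS] at this
          exact this
      have hWQS'' : WQᶜ ∩ S = S \ S' := by
        ext z
        simp only [Set.mem_inter_iff, Set.mem_compl_iff, Set.mem_diff]
        constructor
        · rintro ⟨hz, hzS⟩
          exact ⟨hzS, fun hz' => hz ((hWQS ▸ hz' : z ∈ WQ ∩ S).1)⟩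
        · rintro ⟨hzS, hz'⟩
          refine ⟨fun hzW => hz' ?_, hzS⟩
          have : z ∈ WQ ∩ S := ⟨hzW, hzS⟩
          rw [hWQS] at this
          exact this
      have hPside'' : (P ∩ (S ∩ (S \ S'))).Nonempty := by
        obtain ⟨x, hxS, hxP⟩ := hPS
        refine ⟨x, hxP, hxS, hxS, fun hx' => hside ⟨x, hxP, hxS, hx'⟩⟩
      have hQside'' : (Q ∩ (S ∩ (S \ S'))).Nonempty := by
        obtain ⟨x, hxS, hxQ⟩ := hQS
        refine ⟨x, hxQ, hxS, hxS, fun hx' => hQside ⟨x, hxQ, hxS, hx'⟩⟩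
      exact core G hG S (S \ S') s' (hS'sub hs') (fun h => h.2 hs') P Q
        (hdisj P Q hPPa hQPa hne) (hconn P hPPa) (hconn Q hQPa) WPᶜ WQᶜ
        hWPS'' hWQS''
        ((ecut_compl G WP).symm ▸ hEP) ((ecut_compl G WQ).symm ▸ hEQ)
        hPside'' hQside''
  -- conclude: T has at most two elements
  rcases T.eq_empty_or_nonempty with hTe | ⟨A, hA⟩
  · rw [hTe]; simp
  by_cases hsub : T ⊆ {A}
  · calc T.ncard ≤ ({A} : Set (Set V)).ncard :=
        Set.ncard_le_ncard hsub (Set.finite_singleton A)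
      _ ≤ 2 := by simp
  · have : ∃ B ∈ T, B ∉ ({A} : Set (Set V)) := Set.not_subset.mp hsub
    obtain ⟨B, hB, hBA⟩ := this
    have hBA' : B ≠ A := by simpa using hBA
    have hABiff : ¬ ((A ∩ (S ∩ S')).Nonempty ↔ (B ∩ (S ∩ S')).Nonempty) :=
      fun h => key A B hA hB hBA'.symm h
    have hTsub : T ⊆ {A, B} := by
      intro C hC
      by_contra hCn
      simp only [Set.mem_insert_iff, Set.mem_singleton_iff, not_or] at hCn
      by_cases hCA : ((C ∩ (S ∩ S')).Nonempty ↔ (A ∩ (S ∩ S')).Nonempty)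
      · exact key C A hC hA hCn.1 hCA
      · have hCB : ((C ∩ (S ∩ S')).Nonempty ↔ (B ∩ (S ∩ S')).Nonempty) := by tauto
        exact key C B hC hB hCn.2 hCB
    calc T.ncard ≤ ({A, B} : Set (Set V)).ncard :=
        Set.ncard_le_ncard hTsub ((Set.finite_singleton B).insert A)
      _ ≤ ({B} : Set (Set V)).ncard + 1 := Set.ncard_insert_le A {B}
      _ ≤ 2 := by simp
end

section
/- Let G = (V, E) be a connected graph, T ⊆ V, with parameters q ≥ t > 0 and d ≥ c > 0, and let E' be an IA_G(T, t, q, d, c) set with associated vertex partition P. Then: (1) for any ∅ ⊊ T' ⊆ T, if there is a (T', T∖T', t, c)-cut in G of size α ≤ c, then there is a (T', T∖T', q, α)-cut (V', V∖V') whose cut-set is a subset of E'; (2) if two distinct vertices x, y ∈ T are in the same connected component of G ∖ E', then for any T' ⊆ T with |T' ∩ {x,y}| = 1, there is no (T', T∖T', t, c)-cut of G. -/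
open SimpleGraph

lemma cross_walk {V : Type*} {G : SimpleGraph V} (B : Set V) :
    ∀ {x y : V}, G.Walk x y → x ∈ B → y ∉ B →
      ∃ u v, u ∈ B ∧ v ∉ B ∧ G.Adj u v := by
  intro x y w
  induction w with
  | nil => intro hx hy; exact absurd hx hy
  | @cons a b cdum h p ih =>
      intro hx hy
      by_cases hb : b ∈ B
      · exact ih hb hy
      · exact ⟨a, b, hx, hb, h⟩

/-- Basic properties of an `IA_G(T, t, q, d, c)` set `E'` of a connected graph `G`:
(1) for every nonempty `T' ⊆ T`, if there is a `(T', T∖T', t, c)`-cut of size `α ≤ c`,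
then there is a `(T', T∖T', q, α)`-cut whose cut-set is contained in `E'`;
(2) if two distinct terminals `x, y ∈ T` lie in the same connected component of `G ∖ E'`,
then for any `T' ⊆ T` containing exactly one of `x`, `y`, there is no
`(T', T∖T', t, c)`-cut of `G`. -/
theorem statement_12 {V : Type*} [Fintype V] [DecidableEq V]
    (G : SimpleGraph V) (hG : G.Connected) (T : Set V)
    (t q d c : ℕ) (ht : 0 < t) (htq : t ≤ q) (hc : 0 < c) (hcd : c ≤ d)
    (E' : Set (Sym2 V)) (hIA : IsIASet G T t q d c E') :
    (∀ T' : Set V, T' ⊆ T → T'.Nonempty → ∀ α : ℕ, α ≤ c →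
      (∃ A : Set V, A.ncard ≤ t ∧ A ∩ T = T' ∧ (ecut G A).ncard = α) →
      ∃ B : Set V, B.ncard ≤ q ∧ B ∩ T = T' ∧ (ecut G B).ncard ≤ α ∧ ecut G B ⊆ E') ∧
    (∀ x ∈ T, ∀ y ∈ T, x ≠ y → (G.deleteEdges E').Reachable x y →
      ∀ T' : Set V, T' ⊆ T → (x ∈ T' ↔ y ∉ T') →
        ¬ ∃ A : Set V, A.ncard ≤ t ∧ A ∩ T = T' ∧ (ecut G A).ncard ≤ c) := by
  obtain ⟨Pa, hPart, hConn, hE', hMain⟩ := hIA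
  have main : ∀ T' : Set V, T' ⊆ T → T'.Nonempty → ∀ α : ℕ, α ≤ c →
      (∃ A : Set V, A.ncard ≤ t ∧ A ∩ T = T' ∧ (ecut G A).ncard = α) →
      ∃ B : Set V, B.ncard ≤ q ∧ B ∩ T = T' ∧ (ecut G B).ncard ≤ α ∧ ecut G B ⊆ E' := by
    rintro T' hT'T hT'ne α hαc ⟨A, hAt, hAT, hAα⟩
    obtain ⟨v0, hv0⟩ := hT'ne
    have hW : IsComponentSet G Set.univ :=
      ⟨v0, (Set.eq_univ_of_forall (fun u => hG.preconnected u v0)).symm⟩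
    obtain ⟨B, _, hBq, hBT, hBα, hBP⟩ :=
      hMain Set.univ hW T' (fun a ha => ⟨hT'T ha, trivial⟩) ⟨v0, hv0⟩ α
        (le_trans hαc hcd) ⟨A, Set.subset_univ A, hAt, hAT, hAα⟩
    refine ⟨B, hBq, hBT, hBα, ?_⟩
    intro e he
    obtain ⟨heE, u, v, rfl, huB, hvB⟩ := he
    rw [hE']
    refine ⟨heE, u, v, rfl, ?_⟩
    rintro P hP ⟨huP, hvP⟩
    have hwithin : s(u, v) ∈ edgesWithin P := by
      intro x hx
      rcases Sym2.mem_iff.mp hx with rfl | rfl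
      · exact huP
      · exact hvP
    have hzero := hBP P hP
    have hac : α - c = 0 := Nat.sub_eq_zero_of_le hαc
    have hpos : 0 < (ecut G B ∩ edgesWithin P).ncard :=
      (Set.ncard_pos (Set.toFinite _)).mpr ⟨s(u, v), ⟨heE, u, v, rfl, huB, hvB⟩, hwithin⟩
    omega
  refine ⟨main, ?_⟩
  rintro x hxT y hyT hxy hreach T' hT'T hiff ⟨A, hAt, hAT, hAcut⟩
  have hT'ne : T'.Nonempty := by
    by_cases hx : x ∈ T'
    · exact ⟨x, hx⟩
    · exact ⟨y, not_not.mp (fun h => hx (hiff.mpr h))⟩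
  obtain ⟨B, hBq, hBT, hBα, hBsub⟩ :=
    main T' hT'T hT'ne (ecut G A).ncard hAcut ⟨A, hAt, hAT, rfl⟩
  have hxB : x ∈ B ↔ x ∈ T' := by
    constructor
    · intro h; rw [← hBT]; exact ⟨h, hxT⟩
    · intro h; rw [← hBT] at h; exact h.1
  have hyB : y ∈ B ↔ y ∈ T' := by
    constructor
    · intro h; rw [← hBT]; exact ⟨h, hyT⟩
    · intro h; rw [← hBT] at h; exact h.1
  have key : ¬ ∃ u v : V, u ∈ B ∧ v ∉ B ∧ (G.deleteEdges E').Reachable u v := by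
    rintro ⟨u, v, hu, hv, ⟨w⟩⟩
    obtain ⟨a, b, haB, hbB, hadj⟩ := cross_walk B w hu hv
    rw [SimpleGraph.deleteEdges_adj] at hadj
    exact hadj.2 (hBsub ⟨hadj.1, a, b, rfl, haB, hbB⟩)
  by_cases hx : x ∈ T'
  · exact key ⟨x, y, hxB.mpr hx, fun h => (hiff.mp hx) (hyB.mp h), hreach⟩
  · have hy : y ∈ T' := not_not.mp (fun h => hx (hiff.mpr h))
    exact key ⟨y, x, hyB.mpr hy, fun h => hx (hxB.mp h), hreach.symm⟩
end
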